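/- Suppose rank(Σ_{l=1}^L B_l²) = K. Then the positive semidefinite matrix S̃_sum = Σ_{l=1}^L Ω_l² satisfies λ_K(S̃_sum) ≥ θ_min⁴ n_min² λ_K(Σ_{l=1}^L B_l²), where λ_K denotes the K-th largest eigenvalue. -/

import Mathlib

open Matrix MeasureTheory ProbabilityTheory
open scoped BigOperators ENNReal

noncomputable section

/-- Euclidean norm of a finite real vector. -/
def vecNorm {m : ℕ} (v : Fin m → ℝ) : ℝ := Real.sqrt (∑ i, v i ^ 2)

/-- Frobenius norm of a real matrix. -/
def frobNorm {m p : ℕ} (M : Matrix (Fin m) (Fin p) ℝ) : ℝ :=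
  Real.sqrt (∑ i, ∑ j, M i j ^ 2)

/-- Spectral norm (ℓ² operator norm) of a real matrix. -/
def specNorm {m p : ℕ} (M : Matrix (Fin m) (Fin p) ℝ) : ℝ :=
  sSup ((fun x => vecNorm (M.mulVec x)) '' {x : Fin p → ℝ | vecNorm x ≤ 1})

open Classical in
/-- The k-th largest (1-indexed) eigenvalue in magnitude of a real symmetric matrix
(`0` if the matrix is not Hermitian). -/
def kthAbsEig {m : ℕ} (M : Matrix (Fin m) (Fin m) ℝ) (k : ℕ) : ℝ :=
  if hM : M.IsHermitian then
    (((Finset.univ : Finset (Fin m)).val.map fun i => |hM.eigenvalues i|).sort (· ≤ ·)).getD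
      (m - k) 0
  else 0

/-- `Z` is a community membership matrix: 0/1 entries, exactly one 1 per row,
every column nonzero. -/
def IsMembership {n K : ℕ} (Z : Matrix (Fin n) (Fin K) ℝ) : Prop :=
  (∀ i k, Z i k = 0 ∨ Z i k = 1) ∧ (∀ i, ∑ k, Z i k = 1) ∧ (∀ k, ∃ i, Z i k = 1)

/-- The MLDCSBM model hypotheses on the parameters `Z`, `θ`, `B`. -/
def MLDCSBM {n L K : ℕ} (Z : Matrix (Fin n) (Fin K) ℝ) (θ : Fin n → ℝ)
    (B : Fin L → Matrix (Fin K) (Fin K) ℝ) : Prop :=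
  IsMembership Z ∧ (∀ i, 0 < θ i ∧ θ i ≤ 1) ∧
    (∀ l, (B l).IsSymm ∧ ∀ a b, 0 ≤ B l a b ∧ B l a b ≤ 1)

/-- Ω_l = Θ Z B_l Zᵀ Θ. -/
def OmegaL {n K : ℕ} (θ : Fin n → ℝ) (Z : Matrix (Fin n) (Fin K) ℝ)
    (Bl : Matrix (Fin K) (Fin K) ℝ) : Matrix (Fin n) (Fin n) ℝ :=
  Matrix.diagonal θ * Z * Bl * Zᵀ * Matrix.diagonal θ

def thetaMin {n : ℕ} (θ : Fin n → ℝ) : ℝ := sInf (Set.range θ)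
def thetaMax {n : ℕ} (θ : Fin n → ℝ) : ℝ := sSup (Set.range θ)

/-- Minimum community size. -/
def nMin {n K : ℕ} (Z : Matrix (Fin n) (Fin K) ℝ) : ℝ :=
  sInf (Set.range fun k : Fin K => ∑ i, Z i k)

/-- Maximum community size. -/
def nMax {n K : ℕ} (Z : Matrix (Fin n) (Fin K) ℝ) : ℝ :=
  sSup (Set.range fun k : Fin K => ∑ i, Z i k)

/-- Column `k` of a matrix, as a vector. -/
def colVec {n K : ℕ} (U : Matrix (Fin n) (Fin K) ℝ) (k : Fin K) : Fin n → ℝ := fun i => U i k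

/-- Row-normalized version of a matrix: each row divided by its Euclidean norm. -/
def rowNormalize {n K : ℕ} (U : Matrix (Fin n) (Fin K) ℝ) : Matrix (Fin n) (Fin K) ℝ :=
  fun i k => U i k / vecNorm (fun j => U i j)

/-- Diagonal degree matrix of a square matrix. -/
def degDiag {n : ℕ} (M : Matrix (Fin n) (Fin n) ℝ) : Matrix (Fin n) (Fin n) ℝ :=
  Matrix.diagonal fun i => ∑ j, M i j

/-! With `A = ΘZ` we have `Ω_l = A B_l Aᵀ`, and since every node lies in exactly one community,
`AᵀA = diag(g)` with `g_k = ∑_i θ_i² Z_ik ≥ g₀ := θ_min² n_min`. For `w` put `u = AᵀA w`; then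
`(Aw)ᵀ S̃ (Aw) = ∑_l (B_l u)ᵀ AᵀA (B_l u) ≥ g₀ uᵀ(∑_l B_l²)u ≥ g₀ λ_K |u|² ≥ g₀² λ_K |Aw|²`,
where `λ_K`, the smallest eigenvalue of the positive semidefinite `∑_l B_l²`, bounds its quadratic
form from below. As `A` is injective, the quadratic form of `S̃` is at least `g₀² λ_K` times the
squared norm on a `K`-dimensional subspace, so by min-max `S̃` has `K` eigenvalues `≥ g₀² λ_K`. -/

section OrderStatistic

variable {α : Type*} [LinearOrder α]

theorem Multiset.le_getD_sort_of_le_card_filter (s : Multiset α) (d : α) {c : α} {k : ℕ}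
    (hk : 0 < k) (hcount : k ≤ Multiset.card (s.filter (c ≤ ·))) :
    c ≤ (s.sort (· ≤ ·)).getD (Multiset.card s - k) d := by
  set l := s.sort (· ≤ ·)
  have hlen : l.length = Multiset.card s := Multiset.length_sort _
  have hcard : Multiset.card (s.filter (c ≤ ·)) = (l.filter (c ≤ ·)).length := by
    rw [← Multiset.coe_card, ← Multiset.filter_coe, Multiset.sort_eq]
  have hks : k ≤ l.length := hlen ▸ hcount.trans (Multiset.card_le_card (Multiset.filter_le _ s))
  have hsorted : l.Pairwise (· ≤ ·) := Multiset.pairwise_sort s _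
  set i := Multiset.card s - k
  have hi : i < l.length := by omega
  rw [List.getD_eq_getElem l d hi]
  by_contra! hlt
  have htake : (l.take (i + 1)).filter (c ≤ ·) = [] := by
    refine List.filter_eq_nil_iff.mpr fun x hx => ?_
    obtain ⟨j, hj, rfl⟩ := List.getElem_of_mem hx
    rw [List.length_take] at hj
    have hji : l[j] ≤ l[i] := by
      simpa using hsorted.rel_get_of_le
        (a := ⟨j, by omega⟩) (b := ⟨i, hi⟩) (Fin.mk_le_mk.mpr (by omega))
    simpa using hji.trans_lt hlt
  have : (l.filter (c ≤ ·)).length ≤ k - 1 := by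
    rw [← List.take_append_drop (i + 1) l, List.filter_append, htake]
    refine (List.length_filter_le _ _).trans ?_
    simp only [List.length_drop]
    omega
  omega

theorem Multiset.getD_sort_zero_le (s : Multiset α) (d : α) {x : α} (hx : x ∈ s) :
    (s.sort (· ≤ ·)).getD 0 d ≤ x := by
  have hsorted := Multiset.pairwise_sort s (· ≤ ·)
  rw [← Multiset.mem_sort (· ≤ ·)] at hx
  rcases h : s.sort (· ≤ ·) with _ | ⟨a, t⟩
  · simp [h] at hx
  · rw [h] at hx hsorted
    rcases List.mem_cons.mp hx with rfl | hxt
    · exact le_rfl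
    · exact List.rel_of_pairwise_cons hsorted hxt

end OrderStatistic

theorem kthAbsEig_nonneg {m : ℕ} (M : Matrix (Fin m) (Fin m) ℝ) (k : ℕ) : 0 ≤ kthAbsEig M k := by
  unfold kthAbsEig
  split_ifs with hM
  · rw [List.getD_eq_getElem?_getD]
    rcases h : (_ : List ℝ)[m - k]? with _ | x
    · exact le_rfl
    · obtain ⟨i, -, rfl⟩ := Multiset.mem_map.mp
        ((Multiset.mem_sort (· ≤ ·)).mp (List.mem_of_getElem? h))
      exact abs_nonneg _
  · exact le_rfl

theorem kthAbsEig_le_abs_eigenvalues {m : ℕ} {M : Matrix (Fin m) (Fin m) ℝ} (hM : M.IsHermitian)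
    (i : Fin m) : kthAbsEig M m ≤ |hM.eigenvalues i| := by
  rw [kthAbsEig, dif_pos hM, Nat.sub_self]
  exact Multiset.getD_sort_zero_le _ _ (Multiset.mem_map_of_mem _ (Finset.mem_univ_val i))

theorem le_kthAbsEig_of_le_card_filter {m k : ℕ} {M : Matrix (Fin m) (Fin m) ℝ}
    (hM : M.IsHermitian) {c : ℝ} (hk : 0 < k)
    (hcount : k ≤ (Finset.univ.filter fun i => c ≤ hM.eigenvalues i).card) :
    c ≤ kthAbsEig M k := by
  set s := (Finset.univ : Finset (Fin m)).val.map fun i => |hM.eigenvalues i|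
  have hcard : Multiset.card s = m := by simp [s]
  have hcount' : k ≤ Multiset.card (s.filter (c ≤ ·)) := by
    rw [Multiset.filter_map, Multiset.card_map]
    exact hcount.trans (Multiset.card_le_card (Multiset.monotone_filter_right _
      fun i (hi : c ≤ hM.eigenvalues i) => hi.trans (le_abs_self _)))
  rw [kthAbsEig, dif_pos hM]
  simpa only [hcard] using Multiset.le_getD_sort_of_le_card_filter s 0 hk hcount'

namespace Matrix.IsHermitian

variable {ι : Type*} [Fintype ι] [DecidableEq ι] {S : Matrix ι ι ℝ} (hS : S.IsHermitian)

def eigenCoords (u : ι → ℝ) : ι → ℝ :=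
  (hS.eigenvectorUnitary : Matrix ι ι ℝ)ᵀ *ᵥ u

theorem eigenCoords_dotProduct_self (u : ι → ℝ) :
    hS.eigenCoords u ⬝ᵥ hS.eigenCoords u = u ⬝ᵥ u := by
  have hU :
      (hS.eigenvectorUnitary : Matrix ι ι ℝ) * (hS.eigenvectorUnitary : Matrix ι ι ℝ)ᵀ = 1 := by
    simpa [star_eq_conjTranspose, conjTranspose_eq_transpose_of_trivial] using
      Unitary.coe_mul_star_self hS.eigenvectorUnitary
  rw [eigenCoords, dotProduct_mulVec, vecMul_transpose, mulVec_mulVec, hU, one_mulVec]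

theorem dotProduct_mulVec_eq_sum_eigenvalues (u : ι → ℝ) :
    u ⬝ᵥ S *ᵥ u = ∑ i, hS.eigenvalues i * hS.eigenCoords u i ^ 2 := by
  conv_lhs => rw [hS.spectral_theorem, Unitary.conjStarAlgAut_apply]
  simp only [star_eq_conjTranspose, conjTranspose_eq_transpose_of_trivial, ← mulVec_mulVec,
    dotProduct_mulVec u, ← mulVec_transpose, eigenCoords]
  simp only [mulVec_diagonal, dotProduct, Function.comp_apply, RCLike.ofReal_real_eq_id, id]
  exact Finset.sum_congr rfl fun i _ => by ring

theorem mul_dotProduct_self_le_dotProduct_mulVec {β : ℝ} (hβ : ∀ i, β ≤ hS.eigenvalues i)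
    (u : ι → ℝ) : β * (u ⬝ᵥ u) ≤ u ⬝ᵥ S *ᵥ u := by
  rw [hS.dotProduct_mulVec_eq_sum_eigenvalues, ← hS.eigenCoords_dotProduct_self, dotProduct,
    Finset.mul_sum]
  refine Finset.sum_le_sum fun i _ => ?_
  rw [← sq]
  exact mul_le_mul_of_nonneg_right (hβ i) (sq_nonneg _)

theorem card_le_card_filter_le_eigenvalues {κ : Type*} [Fintype κ] {A : Matrix ι κ ℝ}
    (hA : Function.Injective A.mulVec) {c : ℝ}
    (hquad : ∀ w, c * ((A *ᵥ w) ⬝ᵥ (A *ᵥ w)) ≤ (A *ᵥ w) ⬝ᵥ S *ᵥ (A *ᵥ w)) :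
    Fintype.card κ ≤ (Finset.univ.filter fun i => c ≤ hS.eigenvalues i).card := by
  by_contra! hlt
  -- by dimension count, some `A w ≠ 0` is orthogonal to every eigenvector with eigenvalue `≥ c`
  let ψ : (κ → ℝ) →ₗ[ℝ] ({i // c ≤ hS.eigenvalues i} → ℝ) :=
    LinearMap.funLeft ℝ ℝ Subtype.val ∘ₗ
      (hS.eigenvectorUnitary : Matrix ι ι ℝ)ᵀ.mulVecLin ∘ₗ A.mulVecLin
  obtain ⟨w, hw, hw0⟩ := Submodule.exists_mem_ne_zero_of_ne_bot
    (LinearMap.ker_ne_bot_of_finrank_lt (f := ψ) (by simpa [Fintype.card_subtype] using hlt))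
  set x := hS.eigenCoords (A *ᵥ w)
  have hx_high : ∀ i, c ≤ hS.eigenvalues i → x i = 0 := fun i hi =>
    congrFun (LinearMap.mem_ker.mp hw) ⟨i, hi⟩
  have hx : x ≠ 0 := by
    rw [Ne, ← dotProduct_self_eq_zero, hS.eigenCoords_dotProduct_self, dotProduct_self_eq_zero]
    exact fun h => hw0 (hA (h.trans (mulVec_zero A).symm))
  obtain ⟨j, hj⟩ := Function.ne_iff.mp hx
  have hlow : hS.eigenvalues j < c := lt_of_not_ge fun h => hj (hx_high j h)
  refine (hquad w).not_gt ?_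
  rw [hS.dotProduct_mulVec_eq_sum_eigenvalues, ← hS.eigenCoords_dotProduct_self, dotProduct,
    Finset.mul_sum]
  refine Finset.sum_lt_sum (fun i _ => ?_) ⟨j, Finset.mem_univ j, ?_⟩
  · rcases le_or_gt c (hS.eigenvalues i) with h | h
    · simp [x, hx_high i h]
    · rw [← sq]
      exact mul_le_mul_of_nonneg_right h.le (sq_nonneg _)
  · rw [← sq]
    exact mul_lt_mul_of_pos_right hlow (pow_two_pos_of_ne_zero hj)

end Matrix.IsHermitian

namespace Matrix

theorem IsSymm.mul_mul_transpose {ι κ R : Type*} [Fintype κ] [CommSemiring R]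
    {B : Matrix κ κ R} (hB : B.IsSymm) (A : Matrix ι κ R) : (A * B * Aᵀ).IsSymm := by
  rw [IsSymm, transpose_mul, transpose_mul, transpose_transpose, hB.eq, Matrix.mul_assoc]

variable {ι κ τ : Type*} [Fintype ι] [Fintype κ] [Fintype τ]

theorem IsHermitian.posSemidef_sq [DecidableEq ι] {M : Matrix ι ι ℝ} (hM : M.IsHermitian) :
    (M ^ 2).PosSemidef := by
  simpa only [hM.eq, ← sq] using posSemidef_conjTranspose_mul_self M

theorem posSemidef_sum_sq [DecidableEq ι] {M : τ → Matrix ι ι ℝ} (hM : ∀ l, (M l).IsHermitian) :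
    (∑ l, M l ^ 2).PosSemidef :=
  posSemidef_sum _ fun l _ => (hM l).posSemidef_sq

theorem mulVec_dotProduct_mulVec {R : Type*} [CommSemiring R] (A : Matrix ι κ R) (x y : κ → R) :
    (A *ᵥ x) ⬝ᵥ (A *ᵥ y) = x ⬝ᵥ (Aᵀ * A) *ᵥ y := by
  rw [← mulVec_mulVec, dotProduct_mulVec x, vecMul_transpose]

theorem IsSymm.dotProduct_sq_mulVec {R : Type*} [CommSemiring R] [DecidableEq ι]
    {M : Matrix ι ι R} (hM : M.IsSymm) (v : ι → R) :
    v ⬝ᵥ (M ^ 2) *ᵥ v = (M *ᵥ v) ⬝ᵥ (M *ᵥ v) := by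
  rw [pow_two, ← mulVec_mulVec, dotProduct_mulVec, ← mulVec_transpose, hM.eq]

theorem IsSymm.dotProduct_conj_sq_mulVec {R : Type*} [CommSemiring R] [DecidableEq ι]
    {B : Matrix κ κ R} (hB : B.IsSymm) (A : Matrix ι κ R) (w : κ → R) :
    (A *ᵥ w) ⬝ᵥ (A * B * Aᵀ) ^ 2 *ᵥ (A *ᵥ w) =
      (B *ᵥ (Aᵀ * A) *ᵥ w) ⬝ᵥ (Aᵀ * A) *ᵥ (B *ᵥ (Aᵀ * A) *ᵥ w) := by
  rw [(hB.mul_mul_transpose A).dotProduct_sq_mulVec, ← mulVec_dotProduct_mulVec]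
  simp only [mulVec_mulVec, Matrix.mul_assoc]

theorem injective_mulVec_of_transpose_mul_eq_diagonal [DecidableEq κ] {A : Matrix ι κ ℝ}
    {g : κ → ℝ} (hG : Aᵀ * A = diagonal g) (hg : ∀ k, g k ≠ 0) : Function.Injective A.mulVec := by
  intro x y hxy
  have h := congrArg (Aᵀ *ᵥ ·) hxy
  simp only [mulVec_mulVec, hG] at h
  funext k
  have hk := congrFun h k
  rw [mulVec_diagonal, mulVec_diagonal] at hk
  exact mul_left_cancel₀ (hg k) hk

theorem sq_mul_mul_dotProduct_le_dotProduct_sum_conj_sq_mulVec [DecidableEq ι] [DecidableEq κ]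
    {A : Matrix ι κ ℝ} {g : κ → ℝ} (hG : Aᵀ * A = diagonal g) {g₀ : ℝ} (hg₀ : 0 ≤ g₀)
    (hg : ∀ k, g₀ ≤ g k) {B : τ → Matrix κ κ ℝ} (hB : ∀ l, (B l).IsSymm) {β : ℝ} (hβ₀ : 0 ≤ β)
    (hβ : ∀ u, β * (u ⬝ᵥ u) ≤ u ⬝ᵥ (∑ l, B l ^ 2) *ᵥ u) (w : κ → ℝ) :
    g₀ ^ 2 * β * ((A *ᵥ w) ⬝ᵥ (A *ᵥ w)) ≤
      (A *ᵥ w) ⬝ᵥ (∑ l, (A * B l * Aᵀ) ^ 2) *ᵥ (A *ᵥ w) := by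
  set u := diagonal g *ᵥ w
  have hdiag : ∀ t, g₀ * (t ⬝ᵥ t) ≤ t ⬝ᵥ diagonal g *ᵥ t := fun t => by
    simp only [dotProduct, mulVec_diagonal, Finset.mul_sum]
    exact Finset.sum_le_sum fun k _ => by nlinarith [hg k, mul_self_nonneg (t k)]
  have hAw : g₀ * ((A *ᵥ w) ⬝ᵥ (A *ᵥ w)) ≤ u ⬝ᵥ u := by
    rw [mulVec_dotProduct_mulVec, hG]
    simp only [u, dotProduct, mulVec_diagonal, Finset.mul_sum]
    exact Finset.sum_le_sum fun k _ => by
      nlinarith [mul_nonneg (sub_nonneg.2 (hg k))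
        (mul_nonneg (hg₀.trans (hg k)) (mul_self_nonneg (w k)))]
  calc g₀ ^ 2 * β * ((A *ᵥ w) ⬝ᵥ (A *ᵥ w))
      = g₀ * (β * (g₀ * ((A *ᵥ w) ⬝ᵥ (A *ᵥ w)))) := by ring
    _ ≤ g₀ * (β * (u ⬝ᵥ u)) := by gcongr
    _ ≤ g₀ * ∑ l, (B l *ᵥ u) ⬝ᵥ (B l *ᵥ u) := by
        gcongr
        calc β * (u ⬝ᵥ u) ≤ u ⬝ᵥ (∑ l, B l ^ 2) *ᵥ u := hβ u
          _ = _ := by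
            rw [sum_mulVec, dotProduct_sum]
            exact Finset.sum_congr rfl fun l _ => (hB l).dotProduct_sq_mulVec u
    _ ≤ ∑ l, (B l *ᵥ u) ⬝ᵥ diagonal g *ᵥ (B l *ᵥ u) := by
        rw [Finset.mul_sum]
        exact Finset.sum_le_sum fun l _ => hdiag _
    _ = (A *ᵥ w) ⬝ᵥ (∑ l, (A * B l * Aᵀ) ^ 2) *ᵥ (A *ᵥ w) := by
        rw [sum_mulVec, dotProduct_sum]
        exact Finset.sum_congr rfl fun l _ => by rw [(hB l).dotProduct_conj_sq_mulVec, hG]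

end Matrix

namespace IsMembership

variable {n K : ℕ} {Z : Matrix (Fin n) (Fin K) ℝ}

theorem nonneg (hZ : IsMembership Z) (i : Fin n) (k : Fin K) : 0 ≤ Z i k :=
  (hZ.1 i k).elim (fun h => h.ge) (fun h => h ▸ zero_le_one)

theorem mul_apply_eq (hZ : IsMembership Z) (i : Fin n) (k k' : Fin K) :
    Z i k * Z i k' = if k = k' then Z i k else 0 := by
  split_ifs with hkk
  · subst hkk
    rcases hZ.1 i k with h | h <;> simp [h]
  · rcases hZ.1 i k with h | h
    · simp [h]
    rcases hZ.1 i k' with h' | h'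
    · simp [h']
    -- two ones in row `i` would make its sum at least 2
    have := Finset.sum_le_sum_of_subset_of_nonneg (Finset.subset_univ {k, k'})
      fun x _ _ => hZ.nonneg i x
    rw [Finset.sum_pair hkk, h, h', hZ.2.1 i] at this
    norm_num at this

theorem transpose_mul_diagonal_mul (hZ : IsMembership Z) (d : Fin n → ℝ) :
    Zᵀ * Matrix.diagonal d * Z = Matrix.diagonal fun k => ∑ i, d i * Z i k := by
  ext k k'
  rw [Matrix.mul_apply, Matrix.diagonal_apply]
  simp only [Matrix.mul_diagonal, Matrix.transpose_apply]
  calc ∑ i, Z i k * d i * Z i k' = ∑ i, d i * (Z i k * Z i k') :=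
        Finset.sum_congr rfl fun i _ => by ring
    _ = _ := by simp_rw [hZ.mul_apply_eq]; split_ifs <;> simp

theorem gram_eq (hZ : IsMembership Z) (θ : Fin n → ℝ) :
    (Matrix.diagonal θ * Z)ᵀ * (Matrix.diagonal θ * Z) =
      Matrix.diagonal fun k => ∑ i, θ i ^ 2 * Z i k := by
  rw [Matrix.transpose_mul, Matrix.diagonal_transpose, Matrix.mul_assoc, ← Matrix.mul_assoc _ _ Z,
    Matrix.diagonal_mul_diagonal, ← Matrix.mul_assoc, hZ.transpose_mul_diagonal_mul]
  simp only [sq]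

theorem one_le_nMin [Nonempty (Fin K)] (hZ : IsMembership Z) : 1 ≤ nMin Z := by
  obtain ⟨k, hk⟩ := (Set.range_nonempty _).csInf_mem (Set.finite_range fun k => ∑ i, Z i k)
  obtain ⟨i, hi⟩ := hZ.2.2 k
  rw [nMin, ← hk, ← hi]
  exact Finset.single_le_sum (fun j _ => hZ.nonneg j k) (Finset.mem_univ i)

theorem sq_thetaMin_mul_nMin_le (hZ : IsMembership Z) {θ : Fin n → ℝ} (hθ : 0 ≤ thetaMin θ)
    (k : Fin K) : thetaMin θ ^ 2 * nMin Z ≤ ∑ i, θ i ^ 2 * Z i k :=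
  calc thetaMin θ ^ 2 * nMin Z ≤ ∑ i, thetaMin θ ^ 2 * Z i k := by
        rw [← Finset.mul_sum]
        exact mul_le_mul_of_nonneg_left (csInf_le (Set.finite_range _).bddBelow ⟨k, rfl⟩)
          (sq_nonneg _)
    _ ≤ ∑ i, θ i ^ 2 * Z i k := Finset.sum_le_sum fun i _ => mul_le_mul_of_nonneg_right
        (pow_le_pow_left₀ hθ (csInf_le (Set.finite_range θ).bddBelow ⟨i, rfl⟩) 2) (hZ.nonneg i k)

end IsMembership

theorem thetaMin_pos {n : ℕ} [Nonempty (Fin n)] {θ : Fin n → ℝ} (hθ : ∀ i, 0 < θ i) :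
    0 < thetaMin θ := by
  obtain ⟨i, hi⟩ := (Set.range_nonempty θ).csInf_mem (Set.finite_range θ)
  rw [thetaMin, ← hi]
  exact hθ i

theorem OmegaL_eq {n K : ℕ} (θ : Fin n → ℝ) (Z : Matrix (Fin n) (Fin K) ℝ)
    (Bl : Matrix (Fin K) (Fin K) ℝ) :
    OmegaL θ Z Bl = Matrix.diagonal θ * Z * Bl * (Matrix.diagonal θ * Z)ᵀ := by
  rw [OmegaL, Matrix.transpose_mul, Matrix.diagonal_transpose]
  simp only [Matrix.mul_assoc]

theorem stmt10_general {n L K : ℕ} (hK : 0 < K)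
    (Z : Matrix (Fin n) (Fin K) ℝ) (θ : Fin n → ℝ)
    (B : Fin L → Matrix (Fin K) (Fin K) ℝ)
    (hmodel : MLDCSBM Z θ B) :
    (∑ l, (OmegaL θ Z (B l)) ^ 2).PosSemidef ∧
    thetaMin θ ^ 4 * nMin Z ^ 2 * kthAbsEig (∑ l, (B l) ^ 2) K ≤
      kthAbsEig (∑ l, (OmegaL θ Z (B l)) ^ 2) K := by
  obtain ⟨hZ, hθ, hB⟩ := hmodel
  have : Nonempty (Fin K) := ⟨⟨0, hK⟩⟩
  have : Nonempty (Fin n) := ⟨(hZ.2.2 ⟨0, hK⟩).choose⟩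
  set A := Matrix.diagonal θ * Z
  set g₀ := thetaMin θ ^ 2 * nMin Z
  have hθmin : 0 < thetaMin θ := thetaMin_pos fun i => (hθ i).1
  have hg₀ : 0 < g₀ := by have := hZ.one_le_nMin; positivity
  have hg := hZ.sq_thetaMin_mul_nMin_le hθmin.le
  have hinj : Function.Injective A.mulVec := Matrix.injective_mulVec_of_transpose_mul_eq_diagonal
    (hZ.gram_eq θ) fun k => (hg₀.trans_le (hg k)).ne'
  have hBpsd := Matrix.posSemidef_sum_sq fun l => Matrix.isHermitian_iff_isSymm.mpr (hB l).1
  have hβ : ∀ i, kthAbsEig (∑ l, B l ^ 2) K ≤ hBpsd.1.eigenvalues i := fun i =>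
    (kthAbsEig_le_abs_eigenvalues hBpsd.1 i).trans_eq (abs_of_nonneg (hBpsd.eigenvalues_nonneg i))
  simp only [OmegaL_eq]
  have hSpsd := Matrix.posSemidef_sum_sq fun l =>
    Matrix.isHermitian_iff_isSymm.mpr ((hB l).1.mul_mul_transpose A)
  refine ⟨hSpsd, le_kthAbsEig_of_le_card_filter hSpsd.1 hK ?_⟩
  refine (Fintype.card_fin K).symm.trans_le
    (hSpsd.1.card_le_card_filter_le_eigenvalues hinj fun w => ?_)
  calc thetaMin θ ^ 4 * nMin Z ^ 2 * kthAbsEig (∑ l, B l ^ 2) K * ((A *ᵥ w) ⬝ᵥ (A *ᵥ w))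
      = g₀ ^ 2 * kthAbsEig (∑ l, B l ^ 2) K * ((A *ᵥ w) ⬝ᵥ (A *ᵥ w)) := by ring
    _ ≤ _ := Matrix.sq_mul_mul_dotProduct_le_dotProduct_sum_conj_sq_mulVec (hZ.gram_eq θ) hg₀.le
        hg (fun l => (hB l).1) (kthAbsEig_nonneg _ _)
        (hBpsd.1.mul_dotProduct_self_le_dotProduct_mulVec hβ) w

theorem stmt10 {n L K : ℕ} (hn : 0 < n) (hL : 0 < L) (hK : 0 < K) (hKn : K ≤ n)
    (Z : Matrix (Fin n) (Fin K) ℝ) (θ : Fin n → ℝ)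
    (B : Fin L → Matrix (Fin K) (Fin K) ℝ)
    (hmodel : MLDCSBM Z θ B)
    (hrank : (∑ l, (B l) ^ 2).rank = K) :
    (∑ l, (OmegaL θ Z (B l)) ^ 2).PosSemidef ∧
    thetaMin θ ^ 4 * nMin Z ^ 2 * kthAbsEig (∑ l, (B l) ^ 2) K ≤
      kthAbsEig (∑ l, (OmegaL θ Z (B l)) ^ 2) K :=
  stmt10_general hK Z θ B hmodel

end
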